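/- Correctness of the projection encoding: for sets S, X₁,…,Xₐ ⊆ H and arity-a symbol f, the conditions (S ∩ f(⊤,…,⊤) = f(X₁,…,Xₐ)) and (S ∩ f(⊤,…,⊤) = ∅ ↔ Xⱼ = ∅) together imply Xⱼ ∩ proj_f^j(S) = proj_f^j(S), i.e., proj_f^j(S) ⊆ Xⱼ; moreover if additionally all Xᵢ are nonempty or S ∩ f(⊤,…,⊤) = ∅, then Xⱼ = proj_f^j(S). -/
import Mathlib


inductive HTerm (F : Type) (ar : F → ℕ) : Type where
  | mk : (f : F) → (Fin (ar f) → HTerm F ar) → HTerm F ar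

inductive SetExpr (V F : Type) (ar : F → ℕ) : Type where
  | var : V → SetExpr V F ar
  | top : SetExpr V F ar
  | bot : SetExpr V F ar
  | union : SetExpr V F ar → SetExpr V F ar → SetExpr V F ar
  | inter : SetExpr V F ar → SetExpr V F ar → SetExpr V F ar
  | neg : SetExpr V F ar → SetExpr V F ar
  | app : (f : F) → (Fin (ar f) → SetExpr V F ar) → SetExpr V F ar

def sem {V F : Type} {ar : F → ℕ} (σ : V → Set (HTerm F ar)) :
    SetExpr V F ar → Set (HTerm F ar)
  | .var X => σ X
  | .top => Set.univ
  | .bot => ∅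
  | .union E₁ E₂ => sem σ E₁ ∪ sem σ E₂
  | .inter E₁ E₂ => sem σ E₁ ∩ sem σ E₂
  | .neg E => Set.univ \ sem σ E
  | .app f E => { t | ∃ hs : Fin (ar f) → HTerm F ar,
      (∀ i, hs i ∈ sem σ (E i)) ∧ t = HTerm.mk f hs }

/-- Constructor image of a family of sets. -/
def ctorImage {F : Type} {ar : F → ℕ} (f : F)
    (X : Fin (ar f) → Set (HTerm F ar)) : Set (HTerm F ar) :=
  { t | ∃ hs : Fin (ar f) → HTerm F ar, (∀ i, hs i ∈ X i) ∧ t = HTerm.mk f hs }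

/-- The jth projection of constructor f on a set S of Herbrand terms. -/
def proj {F : Type} {ar : F → ℕ} (f : F) (j : Fin (ar f))
    (S : Set (HTerm F ar)) : Set (HTerm F ar) :=
  { h | ∃ hs : Fin (ar f) → HTerm F ar, HTerm.mk f hs ∈ S ∧ hs j = h }

theorem stmt_7 {F : Type} {ar : F → ℕ}
    (f : F) (j : Fin (ar f)) (S : Set (HTerm F ar))
    (X : Fin (ar f) → Set (HTerm F ar))
    (h1 : S ∩ ctorImage f (fun _ => Set.univ) = ctorImage f X)
    (h2 : S ∩ ctorImage f (fun _ => Set.univ) = ∅ ↔ X j = ∅) :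
    (X j ∩ proj f j S = proj f j S ∧ proj f j S ⊆ X j) ∧
      (((∀ i, (X i).Nonempty) ∨ S ∩ ctorImage f (fun _ => Set.univ) = ∅) →
        X j = proj f j S) := by
  have hsub : proj f j S ⊆ X j := by
    rintro h ⟨hs, hmem, rfl⟩
    have hin : HTerm.mk f hs ∈ S ∩ ctorImage f (fun _ => Set.univ) :=
      ⟨hmem, hs, fun _ => Set.mem_univ _, rfl⟩
    rw [h1] at hin
    obtain ⟨hs', hX, heq⟩ := hin
    cases heq
    exact hX j
  refine ⟨⟨Set.inter_eq_right.mpr hsub, hsub⟩, ?_⟩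
  rintro (hne | hemp)
  · apply Set.Subset.antisymm _ hsub
    intro h hh
    classical
    choose w hw using hne
    refine ⟨fun i => if hi : i = j then h else w i, ?_, by simp⟩
    have : HTerm.mk f (fun i => if hi : i = j then h else w i) ∈ ctorImage f X := by
      refine ⟨_, fun i => ?_, rfl⟩
      by_cases hi : i = j
      · subst hi; simpa using hh
      · simpa [hi] using hw i
    rw [← h1] at this
    exact this.1
  · rw [h2.mp hemp]
    refine Set.Subset.antisymm (Set.empty_subset _) ?_
    rintro h ⟨hs, hmem, rfl⟩
    have : HTerm.mk f hs ∈ (∅ : Set (HTerm F ar)) :=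
      hemp ▸ ⟨hmem, hs, fun _ => Set.mem_univ _, rfl⟩
    exact this.elim
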